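/- The set of α ∈ ℝ for which the quadratic polynomial P_α(z) = z² + e^{2πiα}z is linearizable at 0 is meager (of first Baire category) in ℝ; equivalently, for a generic α ∈ ℝ in the sense of Baire category, P_α admits no local linearizing coordinate near the origin. (Cremer's theorem.) -/

import Mathlib

/-!
Cremer's argument. If `p` is monic of degree `d ≥ 2` with `p 0 = 0` and `p' 0 = λ`, the nonzero
points of period `n` of `p` are the roots of `(p^[n] z - z) / z`, a monic polynomial of degree
`d ^ n - 1` with constant term `λ ^ n - 1`; one of them therefore has modulus at most
`|λ ^ n - 1| ^ (1 / (d ^ n - 1))`. A linearization of `p` at `0` conjugates it to the rotation by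
`λ`, which has no periodic points but `0` when `λ` is not a root of unity, so `p` is not
linearizable once `|λ ^ n - 1| < c ^ (d ^ n - 1)` is solvable for every `c > 0`. For
`λ = e^{2πiα}` and `d = 2` this holds on a dense `G_δ` set of `α` (each of its open stages
contains the rationals), and the irrational `α` form a residual set as well.
-/

open Metric Set Polynomial Function NNReal

namespace Polynomial

variable {K : Type*} [NormedField K] [IsAlgClosed K]

theorem Monic.exists_mem_roots_nnnorm_le {g : K[X]} (hg : g.Monic) {c : ℝ≥0}
    (h : ‖g.coeff 0‖₊ < c ^ g.natDegree) : ∃ a ∈ g.roots, ‖a‖₊ ≤ c := by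
  by_contra! hc
  have hsplit := IsAlgClosed.splits g
  refine h.not_ge ?_
  calc c ^ g.natDegree = c ^ Multiset.card (g.roots.map (‖·‖₊)) := by
        rw [Multiset.card_map, hsplit.natDegree_eq_card_roots]
    _ ≤ (g.roots.map (‖·‖₊)).prod :=
        Multiset.pow_card_le_prod fun x hx => by
          obtain ⟨a, ha, rfl⟩ := Multiset.mem_map.1 hx
          exact (hc a ha).le
    _ = ‖g.coeff 0‖₊ := by
        rw [hsplit.coeff_zero_eq_prod_roots_of_monic hg]
        simp only [nnnorm_mul, nnnorm_pow, nnnorm_neg, nnnorm_one, one_pow, one_mul]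
        exact (map_multiset_prod (nnnormHom : K →*₀ ℝ≥0) _).symm

section Iterate

variable {R : Type*} [CommSemiring R]

theorem IsMonicOfDegree.iterate_comp_X [Nontrivial R] {p : R[X]} {d : ℕ}
    (hp : IsMonicOfDegree p d) (hd : d ≠ 0) (n : ℕ) : IsMonicOfDegree (p.comp^[n] X) (d ^ n) := by
  induction n with
  | zero => simpa using isMonicOfDegree_X R
  | succ n ih =>
    rw [iterate_succ_apply', pow_succ']
    exact hp.comp (pow_ne_zero n hd) ih

theorem coeff_one_comp_of_coeff_zero_eq_zero {p q : R[X]} (hq : q.coeff 0 = 0) :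
    (p.comp q).coeff 1 = p.coeff 1 * q.coeff 1 := by
  have coeff_one_eq : ∀ r : R[X], r.coeff 1 = (derivative r).eval 0 := fun r => by
    rw [← coeff_zero_eq_eval_zero, coeff_derivative]; simp
  rw [coeff_one_eq, coeff_one_eq, coeff_one_eq, derivative_comp, eval_mul, eval_comp,
    ← coeff_zero_eq_eval_zero q, hq, mul_comm]

theorem coeff_zero_iterate_comp_X {p : R[X]} (hp : p.coeff 0 = 0) (n : ℕ) :
    (p.comp^[n] X).coeff 0 = 0 := by
  rw [coeff_zero_eq_eval_zero, iterate_comp_eval, eval_X]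
  exact iterate_fixed (by rwa [← coeff_zero_eq_eval_zero]) n

theorem coeff_one_iterate_comp_X {p : R[X]} (hp : p.coeff 0 = 0) (n : ℕ) :
    (p.comp^[n] X).coeff 1 = p.coeff 1 ^ n := by
  induction n with
  | zero => simp
  | succ n ih =>
    rw [iterate_succ_apply', coeff_one_comp_of_coeff_zero_eq_zero
      (coeff_zero_iterate_comp_X hp n), ih, pow_succ']

end Iterate

theorem exists_ne_zero_isPeriodicPt_nnnorm_le {p : K[X]} {d n : ℕ} (hp : IsMonicOfDegree p d)
    (hd : 2 ≤ d) (hn : n ≠ 0) (hp0 : p.coeff 0 = 0) (hroot : p.coeff 1 ^ n ≠ 1) {c : ℝ≥0}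
    (hc : ‖p.coeff 1 ^ n - 1‖₊ < c ^ (d ^ n - 1)) :
    ∃ z ≠ 0, ‖z‖₊ ≤ c ∧ IsPeriodicPt p.eval n z := by
  set q := p.comp^[n] X - X
  have hq : IsMonicOfDegree q (d ^ n) :=
    (hp.iterate_comp_X (by omega) n).sub
      (by rw [natDegree_X]; exact Nat.one_lt_pow hn (by omega))
  have hq0 : q.coeff 0 = 0 := by simp [q, coeff_zero_iterate_comp_X hp0]
  have hqX : q = X * q.divX := by simpa [hq0] using (X_mul_divX_add q).symm
  have hg : IsMonicOfDegree q.divX (d ^ n - 1) :=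
    (isMonicOfDegree_X K).of_mul_left (by
      rwa [← hqX, Nat.add_sub_cancel' (Nat.one_le_pow _ _ (by omega))])
  have hg0 : q.divX.coeff 0 = p.coeff 1 ^ n - 1 := by
    simp [q, coeff_divX, coeff_one_iterate_comp_X hp0]
  obtain ⟨z, hz, hzc⟩ := hg.monic.exists_mem_roots_nnnorm_le (by rwa [hg0, hg.natDegree_eq])
  have hgz : q.divX.eval z = 0 := (mem_roots hg.ne_zero).1 hz
  refine ⟨z, ?_, hzc, ?_⟩
  · rintro rfl
    exact hroot (sub_eq_zero.1 (hg0 ▸ coeff_zero_eq_eval_zero q.divX ▸ hgz))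
  · have : q.eval z = 0 := by rw [hqX, eval_mul, hgz, mul_zero]
    simpa [q, sub_eq_zero, IsPeriodicPt, IsFixedPt] using this

end Polynomial

theorem Set.MapsTo.iterate_apply_of_semiconj {α β : Type*} {f : β → β} {g : α → α} {h : α → β}
    {s : Set α} (hs : MapsTo g s s) (hconj : ∀ z ∈ s, f (h z) = h (g z)) (n : ℕ) {z : α}
    (hz : z ∈ s) : f^[n] (h z) = h (g^[n] z) := by
  induction n with
  | zero => rfl
  | succ n ih => rw [iterate_succ_apply', ih, hconj _ (hs.iterate n hz), iterate_succ_apply']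

theorem DifferentiableOn.isOpen_image_of_injOn {h : ℂ → ℂ} {U : Set ℂ}
    (hd : DifferentiableOn ℂ h U) (hU : IsOpen U) (hUc : IsPreconnected U) (hinj : InjOn h U)
    (hUn : U.Nontrivial) : IsOpen (h '' U) := by
  refine ((hd.analyticOnNhd hU).is_constant_or_isOpen hUc).resolve_left ?_ U subset_rfl hU
  rintro ⟨w, hw⟩
  obtain ⟨x, hx, y, hy, hxy⟩ := hUn
  exact hxy (hinj hx hy ((hw x hx).trans (hw y hy).symm))

def IsLinearizableAt (f : ℂ → ℂ) (l : ℂ) : Prop :=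
  ∃ r : ℝ, 0 < r ∧ ∃ h : ℂ → ℂ, DifferentiableOn ℂ h (ball 0 r) ∧ InjOn h (ball 0 r) ∧
    h 0 = 0 ∧ ∀ z ∈ ball 0 r, f (h z) = h (l * z)

open Filter Topology in
theorem IsLinearizableAt.eventually_eq_zero_or_pow_eq_one_of_isPeriodicPt {f : ℂ → ℂ} {l : ℂ}
    (hf : IsLinearizableAt f l) (hl : ‖l‖ = 1) :
    ∀ᶠ z in 𝓝 0, ∀ n, IsPeriodicPt f n z → z = 0 ∨ l ^ n = 1 := by
  obtain ⟨r, hr, h, hd, hinj, h0, hconj⟩ := hf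
  have hball : MapsTo (l * ·) (ball 0 r) (ball 0 r) := fun z hz => by simpa [hl] using hz
  have hopen : IsOpen (h '' ball 0 r) := hd.isOpen_image_of_injOn isOpen_ball
    (convex_ball 0 r).isPreconnected hinj (infinite_of_mem_nhds 0 (ball_mem_nhds 0 hr)).nontrivial
  have himg := hopen.mem_nhds (mem_image_of_mem h (mem_ball_self hr))
  rw [h0] at himg
  filter_upwards [himg]
  rintro _ ⟨w, hw, rfl⟩ n hper
  have hrot : l ^ n * w = w := by
    rw [← mul_left_iterate_apply]
    exact hinj (hball.iterate n hw) hw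
      ((hball.iterate_apply_of_semiconj hconj n hw).symm.trans hper)
  rcases eq_or_ne w 0 with rfl | hw0
  · exact .inl h0
  · exact .inr (mul_right_cancel₀ hw0 (hrot.trans (one_mul w).symm))

theorem Polynomial.not_isLinearizableAt {p : ℂ[X]} {d : ℕ} (hp : IsMonicOfDegree p d)
    (hd : 2 ≤ d) (hp0 : p.coeff 0 = 0) (hl : ‖p.coeff 1‖ = 1) (hroot : ∀ n ≠ 0, p.coeff 1 ^ n ≠ 1)
    (hsmall : ∀ c : ℝ≥0, 0 < c → ∃ n ≠ 0, ‖p.coeff 1 ^ n - 1‖₊ < c ^ (d ^ n - 1)) :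
    ¬ IsLinearizableAt p.eval (p.coeff 1) := by
  intro hlin
  obtain ⟨ε, hε, hnear⟩ := eventually_nhds_iff_ball.1
    (hlin.eventually_eq_zero_or_pow_eq_one_of_isPeriodicPt hl)
  obtain ⟨c, hc0, hcε⟩ := exists_between (Real.toNNReal_pos.2 hε)
  obtain ⟨n, hn, hsm⟩ := hsmall c hc0
  obtain ⟨z, hz0, hzc, hper⟩ :=
    exists_ne_zero_isPeriodicPt_nnnorm_le hp hd hn hp0 (hroot n hn) hsm
  have hz : z ∈ ball 0 ε := by
    rw [mem_ball_zero_iff, ← coe_nnnorm]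
    exact Real.lt_toNNReal_iff_coe_lt.1 (hzc.trans_lt hcε)
  exact (hnear z hz n hper).elim hz0 (hroot n hn)

theorem not_isLinearizableAt_sq_add_mul {l : ℂ} (hl : ‖l‖ = 1) (hroot : ∀ n ≠ 0, l ^ n ≠ 1)
    (hsmall : ∀ c : ℝ≥0, 0 < c → ∃ n ≠ 0, ‖l ^ n - 1‖₊ < c ^ (2 ^ n - 1)) :
    ¬ IsLinearizableAt (fun z => z ^ 2 + l * z) l := by
  have hp : IsMonicOfDegree (X ^ 2 + C l * X) 2 := by
    simpa using isMonicOfDegree_add_add_two l 0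
  have hcoeff1 : (X ^ 2 + C l * X).coeff 1 = l := by simp
  have hnot := Polynomial.not_isLinearizableAt hp le_rfl (by simp) (by rwa [hcoeff1])
    (by rwa [hcoeff1]) (by rwa [hcoeff1])
  simpa [hcoeff1] using hnot

section Rotation

open Complex Real

theorem norm_exp_two_pi_I_mul (α : ℝ) : ‖cexp (2 * π * I * α)‖ = 1 := by
  rw [show 2 * π * I * α = ((2 * π * α : ℝ) : ℂ) * I by push_cast; ring]
  exact norm_exp_ofReal_mul_I _

theorem Irrational.exp_two_pi_I_mul_pow_ne_one {α : ℝ} (hα : Irrational α) {n : ℕ} (hn : n ≠ 0) :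
    cexp (2 * π * I * α) ^ n ≠ 1 := by
  rw [← Complex.exp_nat_mul, Ne, Complex.exp_eq_one_iff]
  rintro ⟨m, hm⟩
  have : (n * α : ℝ) = m := by
    apply ofReal_injective
    push_cast
    apply mul_right_cancel₀ two_pi_I_ne_zero
    linear_combination hm
  exact Int.not_irrational m (this ▸ hα.natCast_mul hn)

theorem exp_two_pi_I_mul_rat_pow_den (q : ℚ) : cexp (2 * π * I * (q : ℝ)) ^ q.den = 1 := by
  rw [← Complex.exp_nat_mul, ← exp_int_mul_two_pi_mul_I q.num]
  congr 1
  push_cast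
  rw [Rat.cast_def]
  field_simp

def nearRootsOfUnity (k : ℕ) : Set ℝ :=
  ⋃ (n : ℕ) (_ : n ≠ 0),
    {α | ‖cexp (2 * π * I * α) ^ n - 1‖₊ < (1 / ((k : ℝ≥0) + 1)) ^ (2 ^ n - 1)}

theorem isOpen_nearRootsOfUnity (k : ℕ) : IsOpen (nearRootsOfUnity k) :=
  isOpen_biUnion fun _ _ => isOpen_lt (by fun_prop) continuous_const

theorem dense_nearRootsOfUnity (k : ℕ) : Dense (nearRootsOfUnity k) := by
  refine Rat.denseRange_cast.mono ?_
  rintro _ ⟨q, rfl⟩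
  refine mem_iUnion₂.2 ⟨q.den, q.den_nz, ?_⟩
  show ‖_‖₊ < _
  rw [exp_two_pi_I_mul_rat_pow_den, sub_self, nnnorm_zero]
  positivity

theorem exists_pow_sub_one_lt_of_mem_iInter {α : ℝ} (hα : α ∈ ⋂ k, nearRootsOfUnity k) {c : ℝ≥0}
    (hc : 0 < c) : ∃ n ≠ 0, ‖cexp (2 * π * I * α) ^ n - 1‖₊ < c ^ (2 ^ n - 1) := by
  obtain ⟨k, hk⟩ := exists_nat_one_div_lt hc
  obtain ⟨n, hn, hsm⟩ := mem_iUnion₂.1 (mem_iInter.1 hα k)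
  exact ⟨n, hn, hsm.trans_le (pow_le_pow_left₀ (by positivity) hk.le _)⟩

end Rotation

/-- Cremer's theorem: the set of `α ∈ ℝ` for which `P_α(z) = z² + e^{2πiα} z`
is linearizable at `0` is meager in `ℝ`. -/
theorem cremer_generic_nonlinearizable :
    IsMeagre {α : ℝ | ∃ r : ℝ, 0 < r ∧ ∃ h : ℂ → ℂ,
      DifferentiableOn ℂ h (ball (0 : ℂ) r) ∧
      Set.InjOn h (ball (0 : ℂ) r) ∧
      h 0 = 0 ∧
      ∀ z ∈ ball (0 : ℂ) r,
        (h z) ^ 2 + Complex.exp (2 * Real.pi * Complex.I * (α : ℂ)) * h z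
          = h (Complex.exp (2 * Real.pi * Complex.I * (α : ℂ)) * z)} := by
  have hgeneric : {α : ℝ | Irrational α} ∩ ⋂ k, nearRootsOfUnity k ∈ residual ℝ :=
    Filter.inter_mem eventually_residual_irrational <| countable_iInter_mem.2 fun k =>
      residual_of_dense_open (isOpen_nearRootsOfUnity k) (dense_nearRootsOfUnity k)
  refine Filter.mem_of_superset hgeneric fun α ⟨hirr, hnear⟩ hlin => ?_
  exact not_isLinearizableAt_sq_add_mul (norm_exp_two_pi_I_mul α)
    (fun _ hn => hirr.exp_two_pi_I_mul_pow_ne_one hn)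
    (fun _ hc => exists_pow_sub_one_lt_of_mem_iInter hnear hc) hlin
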